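/- arXiv:1712.01729 — 3 statements merged into one kernel-verified Lean document; each statement's English description precedes it below -/
import Mathlib

section
/- Let Ψ_α(z) = z·max_i α_i − (β/L)·log(1 − q + ∑_{i=1}^q exp(z·α_i·L·φ_i)) where L > 0, 0 < β < 1, φ_i ∈ (0,1] with φ_i ≥ 1−γ for all i, α a probability vector with max_i α_i ≤ α_max < 1, and parameters satisfying ε + α_max ≤ β(1−γ) for some ε > 0. Then Ψ_α(0) = 0 and Ψ_α'(0) ≤ −ε; consequently there exists z₀ > 0, uniform over all such α, with Ψ_α(z) < 0 for all 0 < z < z₀. -/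
/-!
The derivative `Ψ_α'(0) = max α - β ∑ α_i φ_i` is at most `α_max - β (1 - γ) ≤ -ε`,
because `∑ α_i φ_i` is an average of numbers `≥ 1 - γ`. For the uniform `z₀`, the bound
`exp t ≥ 1 + t` gives `Ψ_α(z) ≤ z max α - (β / L) log (1 + z L s)` with
`s = ∑ α_i φ_i ∈ [1 - γ, 1]`, and `log (1 + x) ≥ x - x²` turns this into
`Ψ_α(z) ≤ -ε z + β L z²`, negative for `z < ε / (β L)`.
-/

open Real Finset

lemma Real.sub_sq_le_log_one_add {x : ℝ} (hx : 0 ≤ x) : x - x ^ 2 ≤ log (1 + x) := by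
  have hx1 : 0 < 1 + x := by linarith
  calc x - x ^ 2 ≤ 1 - (1 + x)⁻¹ := by
        rw [le_sub_iff_add_le, ← le_sub_iff_add_le', inv_le_iff_one_le_mul₀ hx1]
        nlinarith [pow_nonneg hx 3]
    _ ≤ log (1 + x) := one_sub_inv_le_log_of_pos hx1

section Fintype

variable {ι : Type*} [Fintype ι]

lemma card_add_sum_le_sum_exp (t : ι → ℝ) : Fintype.card ι + ∑ i, t i ≤ ∑ i, exp (t i) := by
  calc (Fintype.card ι : ℝ) + ∑ i, t i = ∑ i, (t i + 1) := by
        rw [sum_add_distrib, sum_const, card_univ, nsmul_one, add_comm]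
    _ ≤ ∑ i, exp (t i) := sum_le_sum fun i _ => add_one_le_exp (t i)

lemma sub_sq_le_log_one_sub_card_add_sum_exp {t : ι → ℝ} (ht : 0 ≤ ∑ i, t i) :
    ∑ i, t i - (∑ i, t i) ^ 2 ≤ log (1 - Fintype.card ι + ∑ i, exp (t i)) := by
  refine (sub_sq_le_log_one_add ht).trans (log_le_log (by linarith) ?_)
  linarith [card_add_sum_le_sum_exp t]

variable {α φ : ι → ℝ} {c : ℝ}

lemma le_sum_mul_of_forall_le (hα0 : ∀ i, 0 ≤ α i) (hα1 : ∑ i, α i = 1)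
    (hφ : ∀ i, c ≤ φ i) : c ≤ ∑ i, α i * φ i := by
  calc c = ∑ i, α i * c := by rw [← sum_mul, hα1, one_mul]
    _ ≤ ∑ i, α i * φ i := sum_le_sum fun i _ => mul_le_mul_of_nonneg_left (hφ i) (hα0 i)

lemma sum_mul_le_of_forall_le (hα0 : ∀ i, 0 ≤ α i) (hα1 : ∑ i, α i = 1)
    (hφ : ∀ i, φ i ≤ c) : ∑ i, α i * φ i ≤ c := by
  calc ∑ i, α i * φ i ≤ ∑ i, α i * c :=
        sum_le_sum fun i _ => mul_le_mul_of_nonneg_left (hφ i) (hα0 i)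
    _ = c := by rw [← sum_mul, hα1, one_mul]

lemma iSup_add_le_mul_sum_mul {β γ ε αmax : ℝ} (hβ : 0 ≤ β) (hcond : ε + αmax ≤ β * (1 - γ))
    (hα0 : ∀ i, 0 ≤ α i) (hα1 : ∑ i, α i = 1) (hαmax : ∀ i, α i ≤ αmax)
    (hφ : ∀ i, 1 - γ ≤ φ i) : (⨆ i, α i) + ε ≤ β * ∑ i, α i * φ i := by
  obtain ⟨i₀, -⟩ := nonempty_of_sum_ne_zero (hα1 ▸ one_ne_zero : ∑ i, α i ≠ 0)
  have : Nonempty ι := ⟨i₀⟩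
  have hs := mul_le_mul_of_nonneg_left (le_sum_mul_of_forall_le hα0 hα1 hφ) hβ
  linarith [ciSup_le hαmax]

end Fintype

noncomputable section

variable {q : ℕ} (β L : ℝ) (α φ : Fin q → ℝ)

def Psi (z : ℝ) : ℝ :=
  z * (⨆ i, α i) - β / L * log (1 - q + ∑ i, exp (z * α i * L * φ i))

lemma Psi_zero : Psi β L α φ 0 = 0 := by
  simp [Psi]

lemma hasDerivAt_Psi_zero :
    HasDerivAt (Psi β L α φ) ((⨆ i, α i) - β / L * ∑ i, α i * L * φ i) 0 := by
  have hsum : HasDerivAt (fun z => 1 - (q : ℝ) + ∑ i, exp (z * α i * L * φ i))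
      (∑ i, α i * L * φ i) 0 := by
    refine (HasDerivAt.fun_sum fun i _ => ?_).const_add _
    simpa using ((((hasDerivAt_id (0 : ℝ)).mul_const (α i)).mul_const L).mul_const (φ i)).exp
  have hlog : HasDerivAt (fun z => log (1 - (q : ℝ) + ∑ i, exp (z * α i * L * φ i)))
      (∑ i, α i * L * φ i) 0 := by
    simpa using hsum.log (by simp)
  exact (hasDerivAt_mul_const _).sub (hlog.const_mul (β / L))

variable {β L α φ}

lemma deriv_Psi_zero (hL : L ≠ 0) :
    deriv (Psi β L α φ) 0 = (⨆ i, α i) - β * ∑ i, α i * φ i := by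
  rw [(hasDerivAt_Psi_zero ..).deriv, mul_sum, mul_sum]
  congr 1
  refine sum_congr rfl fun i _ => ?_
  field_simp

lemma Psi_le {z : ℝ} (hβ : 0 ≤ β) (hL : 0 < L) (hz : 0 ≤ z)
    (hs : 0 ≤ ∑ i, α i * φ i) :
    Psi β L α φ z ≤
      z * ((⨆ i, α i) - β * ∑ i, α i * φ i) + β * L * z ^ 2 * (∑ i, α i * φ i) ^ 2 := by
  have hsum : ∑ i, z * α i * L * φ i = z * L * ∑ i, α i * φ i := by
    rw [mul_sum]
    exact sum_congr rfl fun i _ => by ring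
  have hlog := sub_sq_le_log_one_sub_card_add_sum_exp
    (t := fun i => z * α i * L * φ i) (by rw [hsum]; positivity)
  rw [hsum, Fintype.card_fin] at hlog
  calc Psi β L α φ z
      ≤ z * (⨆ i, α i) - β / L * (z * L * ∑ i, α i * φ i - (z * L * ∑ i, α i * φ i) ^ 2) := by
        unfold Psi
        gcongr
    _ = z * ((⨆ i, α i) - β * ∑ i, α i * φ i) + β * L * z ^ 2 * (∑ i, α i * φ i) ^ 2 := by
        field_simp
        ring

end

theorem Psi_negative_near_zero_general (q : ℕ) (L β γ ε αmax : ℝ)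
    (hL : 0 < L) (hβ0 : 0 < β) (hε : 0 < ε)
    (hcond : ε + αmax ≤ β * (1 - γ)) :
    (∀ α φ : Fin q → ℝ, (∀ i, 0 ≤ α i) → (∑ i, α i) = 1 → (∀ i, α i ≤ αmax) →
      (∀ i, φ i ∈ Set.Ioc (0:ℝ) 1) → (∀ i, 1 - γ ≤ φ i) →
      (fun zz : ℝ => zz * (⨆ i, α i) -
          (β / L) * Real.log (1 - (q:ℝ) + ∑ i, Real.exp (zz * α i * L * φ i))) 0 = 0 ∧
      deriv (fun zz : ℝ => zz * (⨆ i, α i) -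
          (β / L) * Real.log (1 - (q:ℝ) + ∑ i, Real.exp (zz * α i * L * φ i))) 0 ≤ -ε) ∧
    ∃ z₀ > (0:ℝ), ∀ α φ : Fin q → ℝ, (∀ i, 0 ≤ α i) → (∑ i, α i) = 1 →
      (∀ i, α i ≤ αmax) → (∀ i, φ i ∈ Set.Ioc (0:ℝ) 1) → (∀ i, 1 - γ ≤ φ i) →
      ∀ zz : ℝ, 0 < zz → zz < z₀ →
        zz * (⨆ i, α i) -
          (β / L) * Real.log (1 - (q:ℝ) + ∑ i, Real.exp (zz * α i * L * φ i)) < 0 := by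
  refine ⟨fun α φ hα0 hα1 hαmax _ hφγ => ?_, ε / (β * L), by positivity, ?_⟩
  · have key := iSup_add_le_mul_sum_mul hβ0.le hcond hα0 hα1 hαmax hφγ
    refine ⟨Psi_zero β L α φ, ?_⟩
    change deriv (Psi β L α φ) 0 ≤ -ε
    rw [deriv_Psi_zero hL.ne']
    linarith
  · intro α φ hα0 hα1 hαmax hφ hφγ z hz hzz₀
    have key := iSup_add_le_mul_sum_mul hβ0.le hcond hα0 hα1 hαmax hφγ
    have hs0 := le_sum_mul_of_forall_le hα0 hα1 fun i => (hφ i).1.le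
    have hs1 := sum_mul_le_of_forall_le hα0 hα1 fun i => (hφ i).2
    have hz' : β * L * z < ε := by rwa [lt_div_iff₀' (by positivity)] at hzz₀
    change Psi β L α φ z < 0
    calc Psi β L α φ z
        ≤ z * ((⨆ i, α i) - β * ∑ i, α i * φ i) + β * L * z ^ 2 * (∑ i, α i * φ i) ^ 2 :=
          Psi_le hβ0.le hL hz.le hs0
      _ ≤ z * -ε + β * L * z ^ 2 * 1 := by
          gcongr
          · linarith
          · exact pow_le_one₀ hs0 hs1
      _ = z * (β * L * z - ε) := by ring
      _ < 0 := mul_neg_of_pos_of_neg hz (by linarith)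

/-- with `Ψ_α(z) = z·max_i α_i − (β/L)·log(1 − q + ∑_i exp(z α_i L φ_i))`,
under the stated constraints one has `Ψ_α(0) = 0`, `Ψ_α'(0) ≤ −ε`, and there is a
`z₀ > 0`, uniform over all admissible `α` (and `φ`), with `Ψ_α(z) < 0` for
`0 < z < z₀`. -/
theorem Psi_negative_near_zero (q : ℕ) (hq : 2 ≤ q) (L β γ ε αmax : ℝ)
    (hL : 0 < L) (hβ0 : 0 < β) (hβ1 : β < 1) (hε : 0 < ε) (hαmax : αmax < 1)
    (hcond : ε + αmax ≤ β * (1 - γ)) :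
    (∀ α φ : Fin q → ℝ, (∀ i, 0 ≤ α i) → (∑ i, α i) = 1 → (∀ i, α i ≤ αmax) →
      (∀ i, φ i ∈ Set.Ioc (0:ℝ) 1) → (∀ i, 1 - γ ≤ φ i) →
      (fun zz : ℝ => zz * (⨆ i, α i) -
          (β / L) * Real.log (1 - (q:ℝ) + ∑ i, Real.exp (zz * α i * L * φ i))) 0 = 0 ∧
      deriv (fun zz : ℝ => zz * (⨆ i, α i) -
          (β / L) * Real.log (1 - (q:ℝ) + ∑ i, Real.exp (zz * α i * L * φ i))) 0 ≤ -ε) ∧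
    ∃ z₀ > (0:ℝ), ∀ α φ : Fin q → ℝ, (∀ i, 0 ≤ α i) → (∑ i, α i) = 1 →
      (∀ i, α i ≤ αmax) → (∀ i, φ i ∈ Set.Ioc (0:ℝ) 1) → (∀ i, 1 - γ ≤ φ i) →
      ∀ zz : ℝ, 0 < zz → zz < z₀ →
        zz * (⨆ i, α i) -
          (β / L) * Real.log (1 - (q:ℝ) + ∑ i, Real.exp (zz * α i * L * φ i)) < 0 :=
  Psi_negative_near_zero_general q L β γ ε αmax hL hβ0 hε hcond
end

section
/- Let Q̃ be the probability measure on R⁺ defined by Q̃([0,r]) = Q([0, sqrt(r² + (d−1)k²)]). If Q satisfies ∫₁^∞ exp(−∫₁^u Q((r,∞)) dr) du < ∞, then Q̃ satisfies the same condition: ∫₁^∞ exp(−∫₁^u Q̃((r,∞)) dr) du < ∞. -/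
open MeasureTheory Set

noncomputable section

/-- the non-integrability/coverage condition
`∫₁^∞ exp(−∫₁^u Q((r,∞)) dr) du < ∞` is preserved by the radius transformation
`r ↦ sqrt(r² − (d−1)k²)·1{r² ≥ (d−1)k²}`, i.e. it also holds for the pushforward
measure `Q̃`. -/
theorem transformed_radius_condition (d : ℕ) (hd : 1 ≤ d) (k : ℝ) (hk : 0 < k)
    (Q : Measure ℝ) [IsProbabilityMeasure Q] (hQsupp : Q (Set.Iio 0) = 0)
    (hQ : IntegrableOn
      (fun u => Real.exp (-(∫ r in Set.Ioc (1:ℝ) u, (Q (Set.Ioi r)).toReal)))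
      (Set.Ici (1:ℝ))) :
    IntegrableOn
      (fun u => Real.exp (-(∫ r in Set.Ioc (1:ℝ) u,
        ((Q.map (fun s : ℝ =>
            if ((d : ℝ) - 1) * k ^ 2 ≤ s ^ 2 then
              Real.sqrt (s ^ 2 - ((d : ℝ) - 1) * k ^ 2) else 0))
          (Set.Ioi r)).toReal)))
      (Set.Ici (1:ℝ)) := by
  set c : ℝ := ((d : ℝ) - 1) * k ^ 2 with hc
  have hc0 : 0 ≤ c := by
    have : (1:ℝ) ≤ (d:ℝ) := by exact_mod_cast hd
    nlinarith
  set a : ℝ := Real.sqrt c with ha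
  have ha0 : 0 ≤ a := Real.sqrt_nonneg c
  have ha2 : a ^ 2 = c := Real.sq_sqrt hc0
  set T : ℝ → ℝ := fun s => if c ≤ s ^ 2 then Real.sqrt (s ^ 2 - c) else 0 with hT
  have hpow : Measurable fun s : ℝ => s ^ 2 := measurable_id.pow_const 2
  have hTm : Measurable T :=
    Measurable.ite (measurableSet_le measurable_const hpow)
      (Real.continuous_sqrt.measurable.comp (hpow.sub_const c)) measurable_const
  set Q' := Q.map T with hQ'def
  have hprob : IsProbabilityMeasure Q' := Measure.isProbabilityMeasure_map hTm.aemeasurable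
  set h : ℝ → ℝ := fun r => (Q (Ioi r)).toReal with hhdef
  set g : ℝ → ℝ := fun r => (Q' (Ioi r)).toReal with hgdef
  have hanti : Antitone h := fun x y hxy =>
    ENNReal.toReal_mono (measure_ne_top Q _) (measure_mono (Ioi_subset_Ioi hxy))
  have ganti : Antitone g := fun x y hxy =>
    ENNReal.toReal_mono (measure_ne_top Q' _) (measure_mono (Ioi_subset_Ioi hxy))
  have hm : Measurable h := hanti.measurable
  have gm : Measurable g := ganti.measurable
  have hb : ∀ r, h r ≤ 1 := fun r => by
    simpa using ENNReal.toReal_mono (by simp) (prob_le_one (μ := Q) (s := Ioi r))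
  have gb : ∀ r, g r ≤ 1 := fun r => by
    simpa using ENNReal.toReal_mono (by simp) (prob_le_one (μ := Q') (s := Ioi r))
  have hnn : ∀ r, 0 ≤ h r := fun r => ENNReal.toReal_nonneg
  have gnn : ∀ r, 0 ≤ g r := fun r => ENNReal.toReal_nonneg
  -- key pointwise inequality
  have key : ∀ r : ℝ, 0 ≤ r → h (r + a) ≤ g r := by
    intro r hr
    have hmap : Q' (Ioi r) = Q (T ⁻¹' Ioi r) := Measure.map_apply hTm measurableSet_Ioi
    have hsub : Ioi (r + a) ⊆ T ⁻¹' Ioi r := by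
      intro s hs
      simp only [mem_Ioi, mem_preimage] at hs ⊢
      have hs0 : a < s := lt_of_le_of_lt (le_add_of_nonneg_left hr) hs
      have hs2 : (r + a) ^ 2 < s ^ 2 := by nlinarith
      have hcle : c ≤ s ^ 2 := by nlinarith
      have hlt : r ^ 2 < s ^ 2 - c := by nlinarith
      show r < (if c ≤ s ^ 2 then Real.sqrt (s ^ 2 - c) else 0)
      rw [if_pos hcle]
      exact (Real.lt_sqrt hr).mpr hlt
    have hle : Q (Ioi (r + a)) ≤ Q (T ⁻¹' Ioi r) := measure_mono hsub
    show (Q (Ioi (r + a))).toReal ≤ (Q' (Ioi r)).toReal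
    rw [hmap]
    exact ENNReal.toReal_mono (measure_ne_top Q _) hle
  -- integrability on bounded intervals
  have hint : ∀ b e : ℝ, IntervalIntegrable h volume b e := by
    intro b e
    apply IntervalIntegrable.mono_fun'
      (g := fun _ => (1:ℝ)) intervalIntegrable_const hm.aestronglyMeasurable
    filter_upwards with x
    rw [Real.norm_eq_abs, abs_of_nonneg (hnn x)]
    exact hb x
  have gint : ∀ b e : ℝ, IntervalIntegrable g volume b e := by
    intro b e
    apply IntervalIntegrable.mono_fun'
      (g := fun _ => (1:ℝ)) intervalIntegrable_const gm.aestronglyMeasurable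
    filter_upwards with x
    rw [Real.norm_eq_abs, abs_of_nonneg (gnn x)]
    exact gb x
  -- main integral comparison for u ≥ 1
  have main : ∀ u : ℝ, 1 ≤ u →
      (∫ r in Ioc (1:ℝ) u, h r) - a ≤ ∫ r in Ioc (1:ℝ) u, g r := by
    intro u hu
    have hIoc1 : (∫ r in Ioc (1:ℝ) u, h r) = ∫ r in (1:ℝ)..u, h r :=
      (intervalIntegral.integral_of_le hu).symm
    have hIoc2 : (∫ r in Ioc (1:ℝ) u, g r) = ∫ r in (1:ℝ)..u, g r :=
      (intervalIntegral.integral_of_le hu).symm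
    rw [hIoc1, hIoc2]
    -- step 1: ∫_1^u h(r+a) ≤ ∫_1^u g
    have step1 : (∫ r in (1:ℝ)..u, h (r + a)) ≤ ∫ r in (1:ℝ)..u, g r := by
      apply intervalIntegral.integral_mono_on hu _ (gint 1 u)
      · intro x hx
        exact key x (le_trans zero_le_one hx.1)
      · have := (hint (1+a) (u+a)).comp_add_right a
        simpa using this
    -- step 2: translation
    have step2 : (∫ r in (1:ℝ)..u, h (r + a)) = ∫ r in (1+a)..(u+a), h r := by
      simpa using intervalIntegral.integral_comp_add_right (a := 1) (b := u) h a
    -- step 3: adjacency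
    have step3 : (∫ r in (1:ℝ)..(1+a), h r) + (∫ r in (1+a)..(u+a), h r)
        = ∫ r in (1:ℝ)..(u+a), h r :=
      intervalIntegral.integral_add_adjacent_intervals (hint 1 (1+a)) (hint (1+a) (u+a))
    -- step 4: ∫_1^{1+a} h ≤ a
    have step4 : (∫ r in (1:ℝ)..(1+a), h r) ≤ a := by
      have := intervalIntegral.integral_mono_on (by linarith : (1:ℝ) ≤ 1 + a)
        (hint 1 (1+a)) intervalIntegrable_const (fun x _ => hb x)
      simpa using this
    -- step 5: ∫_1^u h ≤ ∫_1^{u+a} h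
    have step5 : (∫ r in (1:ℝ)..u, h r) ≤ ∫ r in (1:ℝ)..(u+a), h r := by
      rw [← intervalIntegral.integral_add_adjacent_intervals (hint 1 u) (hint u (u+a))]
      have : 0 ≤ ∫ r in u..(u+a), h r :=
        intervalIntegral.integral_nonneg (by linarith) (fun x _ => hnn x)
      linarith
    linarith
  -- conclude integrability
  have hF : Monotone (fun u => ∫ r in Ioc (1:ℝ) u, g r) := by
    intro x y hxy
    apply setIntegral_mono_set
    · exact (gint 1 y).1
    · filter_upwards with r using gnn r
    · exact HasSubset.Subset.eventuallyLE (Ioc_subset_Ioc_right hxy)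
  have hQ' : IntegrableOn
      (fun u => Real.exp a * Real.exp (-(∫ r in Ioc (1:ℝ) u, h r))) (Ici (1:ℝ)) :=
    hQ.const_mul _
  apply Integrable.mono' hQ'
  · exact (Real.measurable_exp.comp (hF.measurable.neg)).aestronglyMeasurable
  · filter_upwards [ae_restrict_mem measurableSet_Ici] with u hu
    rw [Real.norm_eq_abs, abs_of_nonneg (Real.exp_pos _).le]
    rw [← Real.exp_add]
    apply Real.exp_le_exp.mpr
    have := main u hu
    linarith


end
end

section
/- Consider a one-dimensional segment model: a Poisson point process on [0,∞) with intensity λ > 0 whose points a are left endpoints of segments [a, a+ℓ_a] with i.i.d. lengths of law Q̃ satisfying ∫₁^∞ exp(−λ∫₁^u Q̃((r,∞)) dr) du < ∞. Then almost surely the union of segments has finitely many connected components, i.e. there is a random point Y such that [Y, ∞) is entirely covered. -/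
open MeasureTheory Set ENNReal

noncomputable section

instance (S : Type*) : MeasurableSpace (Set S) := ⊤

/-- Poisson point process with intensity `μ`: Poisson counts and independence
over disjoint regions. -/
structure IsPoissonPP {S : Type*} [MeasurableSpace S]
    (P : Measure (Set S)) (μ : Measure S) : Prop where
  counts : ∀ A : Set S, MeasurableSet A → μ A ≠ ⊤ → ∀ m : ℕ,
    P {ω | (ω ∩ A).Finite ∧ (ω ∩ A).ncard = m} =
      ENNReal.ofReal (Real.exp (-(μ A).toReal)) * (μ A) ^ m / (Nat.factorial m : ℝ≥0∞)
  indep : ∀ (n : ℕ) (A : Fin n → Set S), (∀ j, MeasurableSet (A j)) →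
    Pairwise (Function.onFun Disjoint A) →
    ∀ Ev : Fin n → Set (Set S),
      P {ω | ∀ j, ω ∩ A j ∈ Ev j} = ∏ j, P {ω | ω ∩ A j ∈ Ev j}

/-!
Let `f` be the integrand of the hypothesis. The interval `[n, n + 1]` is covered as soon as
some point falls in one of the disjoint boxes `[n - j - 1, n - j) × (j + 2, ∞)`, `j < n`, so it
stays uncovered with probability at most `exp (-λ ∑_{j<n} Q̃((j + 2, ∞))) ≤ e^λ f (n + 2)`.
Since `f` is antitone and integrable, these bounds are summable, and Borel–Cantelli covers
`[N, ∞)` for some `N`. Every other component contains the left endpoint of one of the finitely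
many points with first coordinate `≤ N`.
-/

open ProbabilityTheory Filter

namespace IsPoissonPP

variable {S : Type*} [MeasurableSpace S] {P : Measure (Set S)} {μ : Measure S} {A : Set S}

theorem measure_ncard_eq (h : IsPoissonPP P μ) (hA : MeasurableSet A) (hμA : μ A ≠ ⊤)
    (m : ℕ) :
    P {ω | (ω ∩ A).Finite ∧ (ω ∩ A).ncard = m} = poissonMeasure (μ A).toNNReal {m} := by
  rw [h.counts A hA hμA m, poissonMeasure_singleton, ENNReal.ofReal_div_of_pos (by positivity),
    ENNReal.ofReal_mul (by positivity), ENNReal.ofReal_pow NNReal.zero_le_coe,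
    ENNReal.ofReal_natCast, ENNReal.ofReal_coe_nnreal, ENNReal.coe_toNNReal hμA,
    ENNReal.coe_toNNReal_eq_toReal]

theorem measure_inter_eq_empty (h : IsPoissonPP P μ) (hA : MeasurableSet A) (hμA : μ A ≠ ⊤) :
    P {ω | ω ∩ A = ∅} = ENNReal.ofReal (Real.exp (-(μ A).toReal)) := by
  have hzero : {ω : Set S | ω ∩ A = ∅} = {ω | (ω ∩ A).Finite ∧ (ω ∩ A).ncard = 0} := by
    ext ω
    show ω ∩ A = ∅ ↔ (ω ∩ A).Finite ∧ (ω ∩ A).ncard = 0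
    refine ⟨fun hω => ?_, fun ⟨hfin, hcard⟩ => (ncard_eq_zero hfin).1 hcard⟩
    simp [hω]
  simpa [hzero] using h.counts A hA hμA 0

theorem measure_forall_inter_eq_empty (h : IsPoissonPP P μ) {n : ℕ} {A : Fin n → Set S}
    (hA : ∀ j, MeasurableSet (A j)) (hdisj : Pairwise (Function.onFun Disjoint A))
    (hμA : ∀ j, μ (A j) ≠ ⊤) :
    P {ω | ∀ j, ω ∩ A j = ∅} = ENNReal.ofReal (Real.exp (-∑ j, (μ (A j)).toReal)) := by
  have hindep := h.indep n A hA hdisj fun _ => {∅}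
  simp only [mem_singleton_iff] at hindep
  rw [hindep, Finset.prod_congr rfl fun j _ => h.measure_inter_eq_empty (hA j) (hμA j),
    ← ENNReal.ofReal_prod_of_nonneg fun _ _ => (Real.exp_pos _).le, ← Real.exp_sum,
    Finset.sum_neg_distrib]

theorem ae_finite_inter [IsProbabilityMeasure P] (h : IsPoissonPP P μ) (hA : MeasurableSet A)
    (hμA : μ A ≠ ⊤) : ∀ᵐ ω ∂P, (ω ∩ A).Finite := by
  have hunion : {ω : Set S | (ω ∩ A).Finite} =
      ⋃ m : ℕ, {ω | (ω ∩ A).Finite ∧ (ω ∩ A).ncard = m} := by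
    ext ω
    simp
  have hdisj : Pairwise (Function.onFun Disjoint fun m : ℕ =>
      {ω : Set S | (ω ∩ A).Finite ∧ (ω ∩ A).ncard = m}) :=
    fun m k hmk => disjoint_left.2 fun ω hm hk => hmk (hm.2.symm.trans hk.2)
  rw [ae_iff_prob_eq_one measurable_from_top, hunion,
    measure_iUnion hdisj fun _ => MeasurableSpace.measurableSet_top]
  simp_rw [h.measure_ncard_eq hA hμA]
  simpa using Measure.tsum_indicator_apply_singleton (poissonMeasure (μ A).toNNReal) univ
    MeasurableSet.univ

end IsPoissonPP

theorem antitone_toReal_measure_Ioi (ν : Measure ℝ) [IsFiniteMeasure ν] :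
    Antitone fun r => (ν (Ioi r)).toReal := fun _ _ hab =>
  ENNReal.toReal_mono (measure_ne_top _ _) (measure_mono (Ioi_subset_Ioi hab))

theorem integral_Ioc_measure_Ioi_le_sum (ν : Measure ℝ) [IsProbabilityMeasure ν] (n : ℕ) :
    ∫ r in Ioc 1 ((n : ℝ) + 2), (ν (Ioi r)).toReal ≤
      1 + ∑ j ∈ Finset.range n, (ν (Ioi ((j : ℝ) + 2))).toReal := by
  have hsum := ((antitone_toReal_measure_Ioi ν).antitoneOn
    (Icc 1 (1 + ((n + 1 : ℕ) : ℝ)))).integral_le_sum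
  have hcast : ∀ k : ℕ, (1 : ℝ) + ((k + 1 : ℕ) : ℝ) = k + 2 := fun k => by push_cast; ring
  rw [intervalIntegral.integral_of_le (le_add_of_nonneg_right (Nat.cast_nonneg _)),
    Finset.sum_range_succ'] at hsum
  simp only [hcast, Nat.cast_zero, add_zero] at hsum
  have hone : (ν (Ioi 1)).toReal ≤ 1 :=
    ENNReal.toReal_le_of_le_ofReal zero_le_one (by simpa using prob_le_one)
  linarith

theorem exp_neg_mul_sum_le (ν : Measure ℝ) [IsProbabilityMeasure ν] {lam : ℝ} (hlam : 0 ≤ lam)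
    (n : ℕ) :
    Real.exp (-(lam * ∑ j ∈ Finset.range n, (ν (Ioi ((j : ℝ) + 2))).toReal)) ≤
      Real.exp lam * Real.exp (-(lam * ∫ r in Ioc 1 ((n : ℝ) + 2), (ν (Ioi r)).toReal)) := by
  rw [← Real.exp_add, Real.exp_le_exp]
  nlinarith [mul_le_mul_of_nonneg_left (integral_Ioc_measure_Ioi_le_sum ν n) hlam]

theorem antitone_exp_neg_mul_integral_Ioc {g : ℝ → ℝ} (hg : Antitone g) (hg0 : 0 ≤ g)
    {lam : ℝ} (hlam : 0 ≤ lam) (a : ℝ) :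
    Antitone fun u => Real.exp (-(lam * ∫ r in Ioc a u, g r)) := fun u v huv => by
  have hint : IntegrableOn g (Ioc a v) :=
    ((hg.antitoneOn _).integrableOn_isCompact isCompact_Icc).mono_set Ioc_subset_Icc_self
  dsimp only
  gcongr
  exact .of_forall hg0

def segmentUnion (ζ : Set (ℝ × ℝ)) : Set ℝ := ⋃ p ∈ ζ, Icc p.1 (p.1 + p.2)

theorem Ici_subset_of_forall_Icc_subset {C : Set ℝ} {N : ℕ}
    (h : ∀ n ≥ N, Icc (n : ℝ) (n + 1) ⊆ C) : Ici (N : ℝ) ⊆ C := fun x hx =>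
  h ⌊x⌋₊ (Nat.le_floor hx)
    ⟨Nat.floor_le ((Nat.cast_nonneg N).trans hx), (Nat.lt_floor_add_one x).le⟩

theorem finite_connectedComponentIn_segmentUnion {ζ : Set (ℝ × ℝ)} {N : ℝ}
    (hN : Ici N ⊆ segmentUnion ζ) (hfin : (ζ ∩ Iic N ×ˢ univ).Finite) :
    {C | ∃ x ∈ segmentUnion ζ, C = connectedComponentIn (segmentUnion ζ) x}.Finite := by
  refine ((hfin.image fun p => connectedComponentIn (segmentUnion ζ) p.1).insert
    (connectedComponentIn (segmentUnion ζ) N)).subset ?_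
  rintro _ ⟨x, hx, rfl⟩
  obtain ⟨p, hp, hxp⟩ := mem_iUnion₂.1 hx
  rcases le_or_gt p.1 N with hpN | hNp
  · have hsub : Icc p.1 (p.1 + p.2) ⊆ segmentUnion ζ :=
      subset_biUnion_of_mem (u := fun p : ℝ × ℝ => Icc p.1 (p.1 + p.2)) hp
    refine Or.inr ⟨p, ⟨hp, hpN, trivial⟩, connectedComponentIn_eq ?_⟩
    exact isPreconnected_Icc.subset_connectedComponentIn ⟨le_rfl, hxp.1.trans hxp.2⟩ hsub hxp
  · refine Or.inl (connectedComponentIn_eq ?_).symm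
    exact isPreconnected_Ici.subset_connectedComponentIn self_mem_Ici hN (hNp.le.trans hxp.1)

def longSegmentBox (n : ℕ) (j : Fin n) : Set (ℝ × ℝ) :=
  Ico ((n : ℝ) - (j : ℕ) - 1) (n - (j : ℕ)) ×ˢ Ioi (((j : ℕ) : ℝ) + 2)

theorem Icc_subset_segmentUnion_of_mem_longSegmentBox {ζ : Set (ℝ × ℝ)} {n : ℕ} {j : Fin n}
    {p : ℝ × ℝ} (hp : p ∈ ζ) (hpj : p ∈ longSegmentBox n j) :
    Icc (n : ℝ) (n + 1) ⊆ segmentUnion ζ := fun x hx => by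
  obtain ⟨⟨hp₁, hp₁'⟩, hp₂⟩ := hpj
  have hj : (0 : ℝ) ≤ (j : ℕ) := Nat.cast_nonneg _
  refine mem_biUnion hp ⟨?_, ?_⟩
  · linarith [hx.1]
  · linarith [hx.2, mem_Ioi.1 hp₂]

theorem pairwise_disjoint_longSegmentBox (n : ℕ) :
    Pairwise (Function.onFun Disjoint (longSegmentBox n)) := by
  intro j k hjk
  refine disjoint_prod.2 (Or.inl (disjoint_left.2 fun x hxj hxk => ?_))
  rcases (Fin.val_ne_iff.2 hjk).lt_or_gt with h | h
  · have h' : ((j : ℕ) : ℝ) + 1 ≤ (k : ℕ) := by exact_mod_cast h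
    linarith [hxj.1, hxk.2]
  · have h' : ((k : ℕ) : ℝ) + 1 ≤ (j : ℕ) := by exact_mod_cast h
    linarith [hxj.2, hxk.1]

theorem measure_longSegmentBox (lam : ℝ) (Qt : Measure ℝ) [SFinite Qt] (n : ℕ) (j : Fin n) :
    (ENNReal.ofReal lam • (((volume : Measure ℝ).restrict (Ici 0)).prod Qt))
      (longSegmentBox n j) = ENNReal.ofReal lam * Qt (Ioi (((j : ℕ) : ℝ) + 2)) := by
  have hj : ((j : ℕ) : ℝ) + 1 ≤ n := by exact_mod_cast j.2
  have hnonneg : Ico ((n : ℝ) - (j : ℕ) - 1) (n - (j : ℕ)) ⊆ Ici 0 := fun x hx => by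
    simp only [mem_Ici]; linarith [hx.1]
  rw [longSegmentBox, Measure.smul_apply, Measure.prod_prod,
    Measure.restrict_apply measurableSet_Ico, inter_eq_left.2 hnonneg, Real.volume_Ico]
  simp

theorem measure_not_Icc_subset_segmentUnion_le {lam : ℝ} (hlam : 0 ≤ lam) {Qt : Measure ℝ}
    [IsFiniteMeasure Qt] {P : Measure (Set (ℝ × ℝ))}
    (hPP : IsPoissonPP P (ENNReal.ofReal lam •
      (((volume : Measure ℝ).restrict (Ici 0)).prod Qt))) (n : ℕ) :
    P {ζ | ¬ Icc (n : ℝ) (n + 1) ⊆ segmentUnion ζ} ≤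
      ENNReal.ofReal
        (Real.exp (-(lam * ∑ j ∈ Finset.range n, (Qt (Ioi ((j : ℝ) + 2))).toReal))) := by
  have hsub : {ζ | ¬ Icc (n : ℝ) (n + 1) ⊆ segmentUnion ζ} ⊆
      {ζ | ∀ j, ζ ∩ longSegmentBox n j = ∅} := fun ζ hζ j => by
    by_contra hne
    obtain ⟨p, hp, hpj⟩ := nonempty_iff_ne_empty.2 hne
    exact hζ (Icc_subset_segmentUnion_of_mem_longSegmentBox hp hpj)
  refine (measure_mono hsub).trans_eq ?_
  rw [hPP.measure_forall_inter_eq_empty (A := longSegmentBox n)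
    (fun _ => measurableSet_Ico.prod measurableSet_Ioi) (pairwise_disjoint_longSegmentBox n)
    fun j => by
      rw [measure_longSegmentBox]; exact ENNReal.mul_ne_top ofReal_ne_top (measure_ne_top _ _)]
  simp only [measure_longSegmentBox, ENNReal.toReal_mul, ENNReal.toReal_ofReal hlam,
    ← Finset.mul_sum, Fin.sum_univ_eq_sum_range (fun j => (Qt (Ioi ((j : ℝ) + 2))).toReal)]

theorem segment_model_finite_components_general (lam : ℝ) (hlam : 0 < lam)
    (Qt : Measure ℝ) [IsProbabilityMeasure Qt]
    (P : Measure (Set (ℝ × ℝ))) [IsProbabilityMeasure P]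
    (hPP : IsPoissonPP P (ENNReal.ofReal lam •
      (((volume : Measure ℝ).restrict (Set.Ici 0)).prod Qt)))
    (hint : IntegrableOn
      (fun u => Real.exp (-(lam * ∫ r in Set.Ioc (1:ℝ) u, (Qt (Set.Ioi r)).toReal)))
      (Set.Ici (1:ℝ))) :
    ∀ᵐ ζ ∂P,
      (∃ Y : ℝ, Set.Ici Y ⊆ ⋃ p ∈ ζ, Set.Icc p.1 (p.1 + p.2)) ∧
      {C : Set ℝ | ∃ x ∈ ⋃ p ∈ ζ, Set.Icc p.1 (p.1 + p.2),
        C = connectedComponentIn (⋃ p ∈ ζ, Set.Icc p.1 (p.1 + p.2)) x}.Finite := by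
  set f := fun u => Real.exp (-(lam * ∫ r in Ioc (1:ℝ) u, (Qt (Ioi r)).toReal))
  have hf_summable : Summable fun n : ℕ => Real.exp lam * f (n + 2) := by
    have hf_anti : Antitone f := antitone_exp_neg_mul_integral_Ioc
      (antitone_toReal_measure_Ioi Qt) (fun _ => ENNReal.toReal_nonneg) hlam.le 1
    have := (hf_anti.antitoneOn _).summable_of_integrableOn_Ioi (N := 1)
      (by simpa using hint.mono_set Ioi_subset_Ici_self) fun _ _ => (Real.exp_pos _).le
    exact ((summable_nat_add_iff 2).2 this).mul_left _ |>.congr fun n => by push_cast; rfl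
  have hsum : ∑' n : ℕ, P {ζ | ¬ Icc (n : ℝ) (n + 1) ⊆ segmentUnion ζ} ≠ ⊤ := by
    refine ne_top_of_le_ne_top ?_ (ENNReal.tsum_le_tsum fun n =>
      (measure_not_Icc_subset_segmentUnion_le hlam.le hPP n).trans
        (ENNReal.ofReal_le_ofReal (exp_neg_mul_sum_le Qt hlam.le n)))
    rw [← ENNReal.ofReal_tsum_of_nonneg (fun _ => by positivity) hf_summable]
    exact ofReal_ne_top
  have hfin : ∀ᵐ ζ ∂P, ∀ M : ℕ, (ζ ∩ Iic (M : ℝ) ×ˢ univ).Finite :=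
    ae_all_iff.2 fun M => hPP.ae_finite_inter (measurableSet_Iic.prod .univ) <| by
      simp [Measure.prod_prod, Measure.restrict_apply measurableSet_Iic, Iic_inter_Ici,
        ENNReal.mul_eq_top]
  filter_upwards [ae_eventually_notMem hsum, hfin] with ζ hcov hfinζ
  obtain ⟨N, hN⟩ := eventually_atTop.1 hcov
  have hY : Ici (N : ℝ) ⊆ segmentUnion ζ :=
    Ici_subset_of_forall_Icc_subset fun n hn => not_not.1 (hN n hn)
  exact ⟨⟨N, hY⟩, finite_connectedComponentIn_segmentUnion hY (hfinζ N)⟩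

/-- in the one-dimensional Poisson segment model on `[0,∞)` with
intensity `λ` and i.i.d. segment lengths of law `Q̃` satisfying the
Fitzsimmons–Fristedt–Shepp type condition
`∫₁^∞ exp(−λ∫₁^u Q̃((r,∞)) dr) du < ∞`, almost surely the union of segments has
finitely many connected components; in particular some half line `[Y,∞)` is
entirely covered. -/
theorem segment_model_finite_components (lam : ℝ) (hlam : 0 < lam)
    (Qt : Measure ℝ) [IsProbabilityMeasure Qt] (hQsupp : Qt (Set.Iio 0) = 0)
    (P : Measure (Set (ℝ × ℝ))) [IsProbabilityMeasure P]
    (hPP : IsPoissonPP P (ENNReal.ofReal lam •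
      (((volume : Measure ℝ).restrict (Set.Ici 0)).prod Qt)))
    (hint : IntegrableOn
      (fun u => Real.exp (-(lam * ∫ r in Set.Ioc (1:ℝ) u, (Qt (Set.Ioi r)).toReal)))
      (Set.Ici (1:ℝ))) :
    ∀ᵐ ζ ∂P,
      (∃ Y : ℝ, Set.Ici Y ⊆ ⋃ p ∈ ζ, Set.Icc p.1 (p.1 + p.2)) ∧
      {C : Set ℝ | ∃ x ∈ ⋃ p ∈ ζ, Set.Icc p.1 (p.1 + p.2),
        C = connectedComponentIn (⋃ p ∈ ζ, Set.Icc p.1 (p.1 + p.2)) x}.Finite :=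
  segment_model_finite_components_general lam hlam Qt P hPP hint

end
end
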